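/- arXiv:2101.00475 — 2 statements merged into one kernel-verified Lean document; each statement's English description precedes it below -/
import Mathlib

section
/- Let (R, m) be a Noetherian local ring of prime characteristic p > 0 with Fte(R) < ∞ (there is a uniform Frobenius test exponent for all parameter ideals). If x_1, …, x_d is a system of parameters of R and t ≤ d, then Fte((x_1, …, x_t)) ≤ Fte(R). Concretely: if e = Fte(R), then for every a ∈ (x_1,…,x_t)^F one has a^{p^e} ∈ (x_1,…,x_t)^{[p^e]}. -/
open Ideal

/-- The `q`-th Frobenius power of an ideal: the ideal generated by `q`-th powers of its elements. -/
def frobPow {R : Type*} [CommRing R] (I : Ideal R) (q : ℕ) : Ideal R :=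
  Ideal.span ((· ^ q) '' (I : Set R))

/-- The Frobenius closure of an ideal, as a set. -/
def frobClosure {R : Type*} [CommRing R] (I : Ideal R) (p : ℕ) : Set R :=
  {x | ∃ e : ℕ, x ^ p ^ e ∈ frobPow I (p ^ e)}

/-- A parameter ideal of a `d`-dimensional Noetherian local ring: an ideal generated by a
system of parameters, i.e. `d` elements of the maximal ideal generating an ideal whose
radical is the maximal ideal. -/
def IsParameterIdeal {R : Type*} [CommRing R] [IsLocalRing R] (d : ℕ) (q : Ideal R) : Prop :=
  ∃ y : Fin d → R, q = Ideal.span (Set.range y) ∧ q ≤ IsLocalRing.maximalIdeal R ∧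
    IsLocalRing.maximalIdeal R ≤ q.radical

/-!
Approximate `(x₁, …, x_t)` `𝔪`-adically by parameter ideals: each
`qₙ = (x₁, …, x_t, x_{t+1}ⁿ, …, x_dⁿ)` is a parameter ideal with
`(x₁, …, x_t) ⊆ qₙ ⊆ (x₁, …, x_t) + 𝔪ⁿ`. An element `a` of the Frobenius closure of
`(x₁, …, x_t)` lies in that of every `qₙ`, so the uniform exponent `e` gives
`a^{pᵉ} ∈ qₙ^{[pᵉ]} ⊆ (x₁, …, x_t)^{[pᵉ]} + 𝔪ⁿ` for all `n`. Krull's intersection theorem for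
the finite module `R ⧸ (x₁, …, x_t)^{[pᵉ]}` then gives `a^{pᵉ} ∈ (x₁, …, x_t)^{[pᵉ]}`.
-/

open IsLocalRing

section FrobeniusPower

variable {R : Type*} [CommRing R]

lemma frobPow_mono {I J : Ideal R} (h : I ≤ J) (q : ℕ) : frobPow I q ≤ frobPow J q :=
  span_mono (Set.image_mono h)

lemma frobClosure_mono {I J : Ideal R} (h : I ≤ J) (p : ℕ) :
    frobClosure I p ⊆ frobClosure J p :=
  fun _ ⟨e, he⟩ => ⟨e, frobPow_mono h _ he⟩

lemma frobPow_le_self (I : Ideal R) {q : ℕ} (hq : q ≠ 0) : frobPow I q ≤ I := by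
  rw [frobPow, span_le]
  rintro _ ⟨a, ha, rfl⟩
  exact I.pow_mem_of_mem ha q (Nat.pos_of_ne_zero hq)

lemma pow_mem_frobPow_of_mem_frobClosure {I : Ideal R} {p e : ℕ}
    (hI : frobPow (span (frobClosure I p)) (p ^ e) = frobPow I (p ^ e))
    {a : R} (ha : a ∈ frobClosure I p) : a ^ p ^ e ∈ frobPow I (p ^ e) :=
  hI ▸ subset_span ⟨a, subset_span ha, rfl⟩

variable (p : ℕ) [ExpChar R p]

lemma frobPow_eq_map_iterateFrobenius (I : Ideal R) (e : ℕ) :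
    frobPow I (p ^ e) = I.map (iterateFrobenius R p e) :=
  rfl

lemma frobPow_sup (I J : Ideal R) (e : ℕ) :
    frobPow (I ⊔ J) (p ^ e) = frobPow I (p ^ e) ⊔ frobPow J (p ^ e) := by
  simp only [frobPow_eq_map_iterateFrobenius, Ideal.map_sup]

end FrobeniusPower

lemma Ideal.iInf_sup_pow_eq_of_isLocalRing {R : Type*} [CommRing R] [IsLocalRing R]
    [IsNoetherianRing R] (J : Ideal R) {I : Ideal R} (hI : I ≠ ⊤) :
    ⨅ n : ℕ, J ⊔ I ^ n = J := by
  refine le_antisymm (fun b hb => ?_) (le_iInf fun _ => le_sup_left)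
  rw [← Quotient.eq_zero_iff_mem]
  refine (IsHausdorff.of_isLocalRing I (R ⧸ J) hI).haus _ fun n => SModEq.zero.2 ?_
  obtain ⟨j, hj, c, hc, rfl⟩ := Submodule.mem_sup.mp (Submodule.mem_iInf _ |>.mp hb n)
  rw [map_add, Quotient.eq_zero_iff_mem.mpr hj, zero_add, ← mul_one (Quotient.mk J c),
    ← Quotient.algebraMap_eq, ← Algebra.smul_def]
  exact Submodule.smul_mem_smul hc Submodule.mem_top

section ParameterIdeal

variable {R : Type*} [CommRing R] [IsLocalRing R] {d : ℕ}

lemma IsParameterIdeal.le_maximalIdeal {q : Ideal R} (hq : IsParameterIdeal d q) :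
    q ≤ maximalIdeal R :=
  hq.choose_spec.2.1

lemma IsParameterIdeal.maximalIdeal_le_radical {q : Ideal R} (hq : IsParameterIdeal d q) :
    maximalIdeal R ≤ q.radical :=
  hq.choose_spec.2.2

lemma IsParameterIdeal.span_pow {x : Fin d → R}
    (hx : IsParameterIdeal d (span (Set.range x))) {k : Fin d → ℕ} (hk : ∀ i, k i ≠ 0) :
    IsParameterIdeal d (span (Set.range fun i => x i ^ k i)) := by
  refine ⟨_, rfl, span_le.mpr ?_, hx.maximalIdeal_le_radical.trans ?_⟩
  · rintro _ ⟨i, rfl⟩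
    exact pow_mem_of_mem _ (hx.le_maximalIdeal (subset_span ⟨i, rfl⟩)) _
      (Nat.pos_of_ne_zero (hk i))
  · rw [radical_le_radical_iff, span_le]
    rintro _ ⟨i, rfl⟩
    exact ⟨k i, subset_span ⟨i, rfl⟩⟩

end ParameterIdeal

section SpanPow

variable {R ι : Type*} [CommRing R] (x : ι → R) {k : ι → ℕ}

lemma span_image_le_span_range_pow {s : Set ι} (hk : ∀ i ∈ s, k i = 1) :
    span (x '' s) ≤ span (Set.range fun i => x i ^ k i) := by
  rw [span_le]
  rintro _ ⟨i, hi, rfl⟩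
  exact subset_span ⟨i, by simp [hk i hi]⟩

lemma span_range_pow_le_sup_pow {s : Set ι} (hk : ∀ i ∈ s, k i = 1) {J : Ideal R} {n : ℕ}
    (hJ : ∀ i ∉ s, x i ∈ J) (hn : ∀ i ∉ s, n ≤ k i) :
    span (Set.range fun i => x i ^ k i) ≤ span (x '' s) ⊔ J ^ n := by
  rw [span_le]
  rintro _ ⟨i, rfl⟩
  by_cases hi : i ∈ s
  · simp only [hk i hi, pow_one]
    exact mem_sup_left (subset_span ⟨i, hi, rfl⟩)
  · exact mem_sup_right (pow_le_pow_right (hn i hi) (pow_mem_pow (hJ i hi) (k i)))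

end SpanPow

theorem fte_partial_sop_general {R : Type*} [CommRing R] [IsLocalRing R] [IsNoetherianRing R]
    (p : ℕ) [Fact p.Prime] [CharP R p] (d : ℕ)
    (e : ℕ)
    (hFte : ∀ q : Ideal R, IsParameterIdeal d q →
      frobPow (Ideal.span (frobClosure q p)) (p ^ e) = frobPow q (p ^ e))
    (x : Fin d → R) (hsop : IsParameterIdeal d (Ideal.span (Set.range x)))
    (t : ℕ) :
    ∀ a ∈ frobClosure (Ideal.span (x '' {i : Fin d | (i : ℕ) < t})) p,
      a ^ p ^ e ∈ frobPow (Ideal.span (x '' {i : Fin d | (i : ℕ) < t})) (p ^ e) := by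
  intro a ha
  set I := span (x '' {i : Fin d | (i : ℕ) < t})
  have hxm : ∀ i, x i ∈ maximalIdeal R :=
    fun i => hsop.le_maximalIdeal (subset_span ⟨i, rfl⟩)
  rw [← iInf_sup_pow_eq_of_isLocalRing (frobPow I (p ^ e)) (maximalIdeal.isMaximal R).ne_top,
    Submodule.mem_iInf]
  intro n
  let k : Fin d → ℕ := fun i => if (i : ℕ) < t then 1 else n + 1
  have hk : ∀ i ∈ {i : Fin d | (i : ℕ) < t}, k i = 1 := fun i hi => if_pos hi
  have hn : ∀ i ∉ {i : Fin d | (i : ℕ) < t}, n ≤ k i :=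
    fun i hi => (if_neg hi).ge.trans' n.le_succ
  have hq := hsop.span_pow (k := k) fun i => by dsimp only [k]; split_ifs <;> omega
  have ha_q : a ^ p ^ e ∈ frobPow (span (Set.range fun i => x i ^ k i)) (p ^ e) :=
    pow_mem_frobPow_of_mem_frobClosure (hFte _ hq)
      (frobClosure_mono (span_image_le_span_range_pow x hk) p ha)
  refine SetLike.le_def.mp ?_ ha_q
  calc frobPow (span (Set.range fun i => x i ^ k i)) (p ^ e)
      ≤ frobPow (I ⊔ maximalIdeal R ^ n) (p ^ e) :=
        frobPow_mono (span_range_pow_le_sup_pow x hk (fun i _ => hxm i) hn) _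
    _ = frobPow I (p ^ e) ⊔ frobPow (maximalIdeal R ^ n) (p ^ e) := frobPow_sup p _ _ e
    _ ≤ frobPow I (p ^ e) ⊔ maximalIdeal R ^ n :=
        sup_le_sup_left (frobPow_le_self _ (pow_ne_zero _ (Fact.out : p.Prime).ne_zero)) _

theorem fte_partial_sop {R : Type*} [CommRing R] [IsLocalRing R] [IsNoetherianRing R]
    (p : ℕ) [Fact p.Prime] [CharP R p] (d : ℕ) (hd : ringKrullDim R = d)
    (e : ℕ)
    (hFte : ∀ q : Ideal R, IsParameterIdeal d q →
      frobPow (Ideal.span (frobClosure q p)) (p ^ e) = frobPow q (p ^ e))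
    (x : Fin d → R) (hsop : IsParameterIdeal d (Ideal.span (Set.range x)))
    (t : ℕ) (ht : t ≤ d) :
    ∀ a ∈ frobClosure (Ideal.span (x '' {i : Fin d | (i : ℕ) < t})) p,
      a ^ p ^ e ∈ frobPow (Ideal.span (x '' {i : Fin d | (i : ℕ) < t})) (p ^ e) :=
  fte_partial_sop_general p d e hFte x hsop t
end

section
/- Let (R, m) be a Noetherian local ring of prime characteristic p > 0, I an ideal, and a ∈ R. Suppose that for every minimal prime p of R/(I : a) with dim R/p = s (where s = dim R/(I : a) > 0) we have a^{p^h} ∈ I^{[p^h]} R_p for a fixed h ≥ 0. Then dim R/(I^{[p^h]} : a^{p^h}) ≤ s − 1. -/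
open Ideal

/-!
Write `J = (I : a)` and `J' = (I^[q] : a^q)` with `q = p^h`. If `x ∈ J` then `x^q ∈ J'`, so every
prime over `J'` lies over `J`. A chain of primes over `J'` of length `s = dim R/J` starts at a prime
`P` which, by maximality of the chain, is a minimal prime of `J` with `dim R/P = s`. The hypothesis
says `J'` localises to the unit ideal at such a `P`, i.e. `J' ⊄ P`: a contradiction.
-/

section

variable {R : Type*} [CommRing R]

lemma length_le_ringKrullDim_quotient {I : Ideal R} (l : LTSeries (PrimeSpectrum R))
    (hl : ∀ i, I ≤ (l i).asIdeal) : (l.length : WithBot ℕ∞) ≤ ringKrullDim (R ⧸ I) := by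
  rw [ringKrullDim_quotient]
  exact Order.LTSeries.length_le_krullDim ⟨l.length, fun i => ⟨l i, hl i⟩, l.step⟩

lemma ringKrullDim_quotient_le_of_le {I J : Ideal R} (hIJ : I ≤ J) :
    ringKrullDim (R ⧸ J) ≤ ringKrullDim (R ⧸ I) :=
  ringKrullDim_le_of_surjective _ (Ideal.Quotient.factor_surjective hIJ)

section MaximalChain

variable {J : Ideal R} {n : ℕ} (hJ : ringKrullDim (R ⧸ J) ≤ n)
  {l : LTSeries (PrimeSpectrum R)} (hl : ∀ i, J ≤ (l i).asIdeal) (hlen : l.length = n)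
include hJ hl hlen

lemma head_mem_minimalPrimes_of_length_eq : l.head.asIdeal ∈ J.minimalPrimes := by
  refine ⟨⟨l.head.isPrime, hl 0⟩, fun Q ⟨hQ, hJQ⟩ hQle => ?_⟩
  by_contra hnot
  have hQlt : (⟨Q, hQ⟩ : PrimeSpectrum R) < l.head := lt_of_le_of_ne hQle fun heq => hnot heq.ge
  have hcons : ∀ i, J ≤ ((l.cons _ hQlt) i).asIdeal := fun i =>
    hJQ.trans (LTSeries.monotone (l.cons _ hQlt) (Fin.zero_le i))
  have hle := (length_le_ringKrullDim_quotient _ hcons).trans hJ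
  simp only [RelSeries.cons_length, hlen] at hle
  exact absurd (by exact_mod_cast hle : n + 1 ≤ n) (Nat.not_succ_le_self n)

lemma ringKrullDim_quotient_head_of_length_eq : ringKrullDim (R ⧸ l.head.asIdeal) = n :=
  le_antisymm ((ringKrullDim_quotient_le_of_le (hl 0)).trans hJ)
    (hlen ▸ length_le_ringKrullDim_quotient l fun i => l.monotone (Fin.zero_le i))

end MaximalChain

theorem ringKrullDim_quotient_lt_of_not_le_minimalPrimes {J J' : Ideal R} {n : ℕ} (hJ : ringKrullDim (R ⧸ J) ≤ n) (hJJ' : J ≤ J'.radical)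
    (hmin : ∀ P ∈ J.minimalPrimes, ringKrullDim (R ⧸ P) = n → ¬ J' ≤ P) :
    ringKrullDim (R ⧸ J') < n := by
  rw [ringKrullDim_quotient, Order.krullDim_lt_coe_iff]
  intro l
  by_contra! hlen
  let L : LTSeries (PrimeSpectrum R) := l.map Subtype.val fun _ _ h => h
  have hL' : ∀ i, J' ≤ (L i).asIdeal := fun i => (l i).2
  have hL : ∀ i, J ≤ (L i).asIdeal := fun i =>
    hJJ'.trans ((L i).isPrime.radical_le_iff.mpr (hL' i))
  have hLlen : L.length = n := le_antisymm
    (by exact_mod_cast (length_le_ringKrullDim_quotient L hL).trans hJ) hlen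
  exact hmin _ (head_mem_minimalPrimes_of_length_eq hJ hL hLlen)
    (ringKrullDim_quotient_head_of_length_eq hJ hL hLlen) (hL' 0)

lemma pow_mem_colon_frobPow {I : Ideal R} {a x : R} (q : ℕ)
    (hx : x ∈ I.colon (span {a})) : x ^ q ∈ (frobPow I q).colon (span {a ^ q}) := by
  rw [mem_colon_span_singleton, ← mul_pow]
  exact subset_span ⟨x * a, mem_colon_span_singleton.mp hx, rfl⟩

lemma colon_le_radical_frobPow_colon (I : Ideal R) (a : R) (q : ℕ) :
    I.colon (span {a}) ≤ ((frobPow I q).colon (span {a ^ q})).radical :=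
  fun _ hx => ⟨q, pow_mem_colon_frobPow q hx⟩

lemma not_colon_le_of_algebraMap_mem_map {P K : Ideal R} [P.IsPrime]
    {b : R} (hb : algebraMap R (Localization.AtPrime P) b ∈
      K.map (algebraMap R (Localization.AtPrime P))) :
    ¬ K.colon (span {b}) ≤ P := by
  obtain ⟨m, hmP, hm⟩ :=
    (IsLocalization.algebraMap_mem_map_algebraMap_iff P.primeCompl _ K b).mp hb
  exact fun hle => hmP (hle (mem_colon_span_singleton.mpr hm))

end

lemma WithBot.le_coe_sub_one_of_lt_coe {x : WithBot ℕ∞} {n : ℕ} (hx : x < n) :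
    x ≤ ((n - 1 : ℕ) : WithBot ℕ∞) := by
  induction x using WithBot.recBotCoe with
  | bot => exact bot_le
  | coe x =>
    induction x using ENat.recTopCoe with
    | top => exact absurd hx (by exact_mod_cast not_lt_of_ge le_top)
    | coe m =>
      have : m < n := by exact_mod_cast hx
      exact WithBot.coe_le_coe.mpr (by exact_mod_cast (by omega : m ≤ n - 1))

theorem dim_colon_frobenius_drop_general {R : Type*} [CommRing R]
    (p : ℕ) (I : Ideal R) (a : R) (h : ℕ) (s : ℕ)
    (hdim : ringKrullDim (R ⧸ I.colon (Ideal.span {a})) = s)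
    (hloc : ∀ P ∈ (I.colon (Ideal.span {a})).minimalPrimes, ∀ _ : P.IsPrime,
      ringKrullDim (R ⧸ P) = s →
        algebraMap R (Localization.AtPrime P) (a ^ p ^ h) ∈
          (frobPow I (p ^ h)).map (algebraMap R (Localization.AtPrime P))) :
    ringKrullDim (R ⧸ (frobPow I (p ^ h)).colon (Ideal.span {a ^ p ^ h})) ≤ (s - 1 : ℕ) := by
  refine WithBot.le_coe_sub_one_of_lt_coe
    (ringKrullDim_quotient_lt_of_not_le_minimalPrimes hdim.le
      (colon_le_radical_frobPow_colon I a _) fun P hP hPdim => ?_)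
  have := hP.1.1
  exact not_colon_le_of_algebraMap_mem_map (hloc P hP hP.1.1 hPdim)

theorem dim_colon_frobenius_drop {R : Type*} [CommRing R] [IsLocalRing R] [IsNoetherianRing R]
    (p : ℕ) [Fact p.Prime] [CharP R p] (I : Ideal R) (a : R) (h : ℕ) (s : ℕ) (hs : 0 < s)
    (hdim : ringKrullDim (R ⧸ I.colon (Ideal.span {a})) = s)
    (hloc : ∀ P ∈ (I.colon (Ideal.span {a})).minimalPrimes, ∀ _ : P.IsPrime,
      ringKrullDim (R ⧸ P) = s →
        algebraMap R (Localization.AtPrime P) (a ^ p ^ h) ∈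
          (frobPow I (p ^ h)).map (algebraMap R (Localization.AtPrime P))) :
    ringKrullDim (R ⧸ (frobPow I (p ^ h)).colon (Ideal.span {a ^ p ^ h})) ≤ (s - 1 : ℕ) :=
  dim_colon_frobenius_drop_general p I a h s hdim hloc
end
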